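/- Let r and n be positive integers and let ε, ε' ∈ {0,1,…,r−1}^n be such that ε' is a permutation of the entries of ε. Then the following identity holds in ℤ[q,t,u]: ∑_{(γ,π) ∈ G_ε} q^{maj(γ,π)} t^{des(γ,π)} u^{col(ε)} = ∑_{(γ,π) ∈ G_{ε'}} q^{maj(γ,π)} t^{des(γ,π)} u^{col(ε')}. -/

import Mathlib

open Finset

/-- 1-based value of `π` at position `i ∈ {1,…,n}`, with the convention `π(0) = 0`. -/
def wval {n : ℕ} (π : Equiv.Perm (Fin n)) (i : ℕ) : ℕ :=
  if h : 1 ≤ i ∧ i ≤ n then (π ⟨i - 1, by omega⟩ : ℕ) + 1 else 0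

/-- Color at position `i` (1-based), with the convention `ε_0 = 0`. -/
def wcolor {n : ℕ} (ε : Fin n → ℕ) (i : ℕ) : ℕ :=
  if h : 1 ≤ i ∧ i ≤ n then ε ⟨i - 1, by omega⟩ else 0

/-- The Biagioli–Zeng order on colored letters: `(j,c) > (k,d)`. -/
def bzGT (a b : ℕ × ℕ) : Prop :=
  (a.2 = 0 ∧ b.2 = 0 ∧ b.1 < a.1) ∨ (0 < a.2 ∧ 0 < b.2 ∧ a.1 < b.1) ∨ (a.2 = 0 ∧ 0 < b.2)

instance (a b : ℕ × ℕ) : Decidable (bzGT a b) := by unfold bzGT; exact inferInstance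

/-- The descent set `Des(ε,π) ⊆ {0,…,n-1}` of a colored permutation. -/
def DesBZ {n : ℕ} (ε : Fin n → ℕ) (π : Equiv.Perm (Fin n)) : Finset ℕ :=
  (Finset.range n).filter fun i =>
    bzGT (wval π i, wcolor ε i) (wval π (i + 1), wcolor ε (i + 1))

def desBZ {n : ℕ} (ε : Fin n → ℕ) (π : Equiv.Perm (Fin n)) : ℕ := (DesBZ ε π).card

def majBZ {n : ℕ} (ε : Fin n → ℕ) (π : Equiv.Perm (Fin n)) : ℕ := ∑ i ∈ DesBZ ε π, i

/-- The color weight `col(ε)`. -/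
def colwt {n : ℕ} (ε : Fin n → ℕ) : ℕ := ∑ i, ε i

/-- Ordinary descent set `{i ∈ {1,…,n-1} : σ(i) > σ(i+1)}` (1-based). -/
def ordDes {n : ℕ} (σ : Equiv.Perm (Fin n)) : Finset ℕ :=
  (Finset.range n).filter fun i => 1 ≤ i ∧ wval σ (i + 1) < wval σ i

noncomputable def qP : MvPolynomial (Fin 2) ℤ := MvPolynomial.X 0
noncomputable def uP : MvPolynomial (Fin 2) ℤ := MvPolynomial.X 1
noncomputable def qNat (m : ℕ) : MvPolynomial (Fin 2) ℤ := ∑ i ∈ Finset.range m, qP ^ i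
noncomputable def uNat (m : ℕ) : MvPolynomial (Fin 2) ℤ := ∑ i ∈ Finset.range m, uP ^ i

/-- The monomial `m'(j,k)`. -/
noncomputable def mPrime (j k : ℕ) : MvPolynomial (Fin 2) ℤ :=
  if j ≤ k then qP ^ j else qP ^ ((j - 1) % k) * uP ^ ((j - 1) / k)

/-- Lattice points of `cone(F_ε)` at height `k`. -/
def Lset {n : ℕ} (ε : Fin n → ℕ) (k : ℕ) : Finset (Fin n → ℕ) :=
  Fintype.piFinset fun i =>
    if 0 < ε i then Finset.Ioc (k * ε i) (k * (ε i + 1)) else Finset.Icc 0 k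

/-!
The order `j^c > k^d` sees the colors only through whether they vanish, and it compares the letters
themselves only inside one of the two classes (zero / nonzero color). If `ε' = ε ∘ τ`, choose
instead a permutation `e` of the letters that maps the letters of color zero under `ε'` increasingly
onto those under `ε`, and likewise the letters of nonzero color. Then `π ↦ e π` is a bijection
`G_{ε'} → G_ε` preserving the descent set, and `col` is invariant under rearrangement.
-/

theorem Equiv.subtypeCongr_apply_of_pos {α : Type*} {p q : α → Prop} [DecidablePred p]
    [DecidablePred q] (e : {x // p x} ≃ {x // q x}) (f : {x // ¬p x} ≃ {x // ¬q x}) {x : α}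
    (h : p x) : Equiv.subtypeCongr e f x = e ⟨x, h⟩ := by
  simp [Equiv.subtypeCongr, Equiv.sumCompl, h]

theorem Equiv.subtypeCongr_apply_of_neg {α : Type*} {p q : α → Prop} [DecidablePred p]
    [DecidablePred q] (e : {x // p x} ≃ {x // q x}) (f : {x // ¬p x} ≃ {x // ¬q x}) {x : α}
    (h : ¬p x) : Equiv.subtypeCongr e f x = f ⟨x, h⟩ := by
  simp [Equiv.subtypeCongr, Equiv.sumCompl, h]

def Fintype.orderIsoOfCardEq {α β : Type*} [Fintype α] [LinearOrder α] [Fintype β]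
    [LinearOrder β] (h : Fintype.card α = Fintype.card β) : α ≃o β :=
  (Fintype.orderIsoFinOfCardEq α h).symm.trans (Fintype.orderIsoFinOfCardEq β rfl)

theorem exists_perm_lt_iff_on_classes {α : Type*} [Fintype α] [LinearOrder α]
    (p q : α → Prop) [DecidablePred p] [DecidablePred q] (τ : Equiv.Perm α)
    (hτ : ∀ x, p x ↔ q (τ x)) :
    ∃ e : Equiv.Perm α, (∀ x, p x ↔ q (e x)) ∧ ∀ x y, (p x ↔ p y) → (x < y ↔ e x < e y) := by
  let ep := Fintype.orderIsoOfCardEq (Fintype.card_congr (τ.subtypeEquiv (p := p) (q := q) hτ))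
  let en := Fintype.orderIsoOfCardEq
    (Fintype.card_congr (τ.subtypeEquiv (p := (¬p ·)) (q := (¬q ·)) fun x => (hτ x).not))
  refine ⟨Equiv.subtypeCongr ep.toEquiv en.toEquiv, fun x => ?_, fun x y hxy => ?_⟩
  · by_cases hx : p x
    · rw [Equiv.subtypeCongr_apply_of_pos _ _ hx]
      exact iff_of_true hx (ep ⟨x, hx⟩).2
    · rw [Equiv.subtypeCongr_apply_of_neg _ _ hx]
      exact iff_of_false hx (en ⟨x, hx⟩).2
  · by_cases hx : p x
    · have hy := hxy.mp hx
      rw [Equiv.subtypeCongr_apply_of_pos _ _ hx, Equiv.subtypeCongr_apply_of_pos _ _ hy]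
      exact (ep.lt_iff_lt (x := ⟨x, hx⟩) (y := ⟨y, hy⟩)).symm
    · have hy := fun h => hx (hxy.mpr h)
      rw [Equiv.subtypeCongr_apply_of_neg _ _ hx, Equiv.subtypeCongr_apply_of_neg _ _ hy]
      exact (en.lt_iff_lt (x := ⟨x, hx⟩) (y := ⟨y, hy⟩)).symm

theorem wval_zero {n : ℕ} (π : Equiv.Perm (Fin n)) : wval π 0 = 0 := dif_neg (by omega)

theorem wcolor_zero {n : ℕ} (ε : Fin n → ℕ) : wcolor ε 0 = 0 := dif_neg (by omega)

theorem wval_succ {n : ℕ} (π : Equiv.Perm (Fin n)) {i : ℕ} (hi : i < n) :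
    wval π (i + 1) = π ⟨i, hi⟩ + 1 := dif_pos ⟨by omega, hi⟩

theorem wcolor_succ {n : ℕ} (ε : Fin n → ℕ) {i : ℕ} (hi : i < n) :
    wcolor ε (i + 1) = ε ⟨i, hi⟩ := dif_pos ⟨by omega, hi⟩

theorem bzGT_zero_left (j c : ℕ) : bzGT (0, 0) (j + 1, c) ↔ 0 < c := by
  unfold bzGT; omega

section Relabel

variable {n : ℕ} {c c' : Fin n → ℕ} {e : Equiv.Perm (Fin n)}

theorem bzGT_relabel_iff (hpos : ∀ x, 0 < c' x ↔ 0 < c (e x))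
    (hlt : ∀ x y, (0 < c' x ↔ 0 < c' y) → (x < y ↔ e x < e y)) (x y : Fin n) :
    bzGT ((x : ℕ) + 1, c' x) ((y : ℕ) + 1, c' y) ↔
      bzGT ((e x : ℕ) + 1, c (e x)) ((e y : ℕ) + 1, c (e y)) := by
  have hx := hpos x
  have hy := hpos y
  have hxy := fun h => Fin.lt_def.symm.trans ((hlt x y h).trans Fin.lt_def)
  have hyx := fun h => Fin.lt_def.symm.trans ((hlt y x h).trans Fin.lt_def)
  unfold bzGT
  by_cases hcx : 0 < c' x <;> by_cases hcy : 0 < c' y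
  · have := hxy (iff_of_true hcx hcy); have := hyx (iff_of_true hcy hcx); omega
  · omega
  · omega
  · have := hxy (iff_of_false hcx hcy); have := hyx (iff_of_false hcy hcx); omega

theorem DesBZ_relabel (hpos : ∀ x, 0 < c' x ↔ 0 < c (e x))
    (hlt : ∀ x y, (0 < c' x ↔ 0 < c' y) → (x < y ↔ e x < e y)) (π : Equiv.Perm (Fin n)) :
    DesBZ (fun i => c' (π i)) π = DesBZ (fun i => c ((e * π) i)) (e * π) := by
  refine Finset.filter_congr fun i hi => ?_
  rw [Finset.mem_range] at hi
  rcases i with _ | j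
  · simp only [wval_zero, wcolor_zero, wval_succ _ hi, wcolor_succ _ hi, bzGT_zero_left]
    exact hpos _
  · simp only [wval_succ _ (Nat.lt_of_succ_lt hi), wcolor_succ _ (Nat.lt_of_succ_lt hi),
      wval_succ _ hi, wcolor_succ _ hi]
    exact bzGT_relabel_iff hpos hlt _ _

end Relabel

theorem rearrangement_same_generating_polynomial_general (n : ℕ)
    (ε ε' : Fin n → ℕ)
    (τ : Equiv.Perm (Fin n)) (hτ : ∀ i, ε' i = ε (τ i)) :
    ∑ π : Equiv.Perm (Fin n),
        (MvPolynomial.X 0 : MvPolynomial (Fin 3) ℤ) ^ majBZ (fun i => ε (π i)) π *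
          MvPolynomial.X 1 ^ desBZ (fun i => ε (π i)) π *
          MvPolynomial.X 2 ^ colwt ε =
      ∑ π : Equiv.Perm (Fin n),
        (MvPolynomial.X 0 : MvPolynomial (Fin 3) ℤ) ^ majBZ (fun i => ε' (π i)) π *
          MvPolynomial.X 1 ^ desBZ (fun i => ε' (π i)) π *
          MvPolynomial.X 2 ^ colwt ε' := by
  obtain ⟨e, hpos, hlt⟩ :=
    exists_perm_lt_iff_on_classes (0 < ε' ·) (0 < ε ·) τ fun x => by rw [hτ]
  have hcol : colwt ε' = colwt ε := by
    simp only [colwt, hτ]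
    exact Equiv.sum_comp τ ε
  rw [hcol, ← Equiv.sum_comp (Equiv.mulLeft e)]
  refine Finset.sum_congr rfl fun π _ => ?_
  simp only [Equiv.coe_mulLeft, majBZ, desBZ, DesBZ_relabel hpos hlt π]

theorem rearrangement_same_generating_polynomial (r n : ℕ) (hr : 0 < r) (hn : 0 < n)
    (ε ε' : Fin n → ℕ) (hε : ∀ i, ε i < r) (hε' : ∀ i, ε' i < r)
    (τ : Equiv.Perm (Fin n)) (hτ : ∀ i, ε' i = ε (τ i)) :
    ∑ π : Equiv.Perm (Fin n),
        (MvPolynomial.X 0 : MvPolynomial (Fin 3) ℤ) ^ majBZ (fun i => ε (π i)) π *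
          MvPolynomial.X 1 ^ desBZ (fun i => ε (π i)) π *
          MvPolynomial.X 2 ^ colwt ε =
      ∑ π : Equiv.Perm (Fin n),
        (MvPolynomial.X 0 : MvPolynomial (Fin 3) ℤ) ^ majBZ (fun i => ε' (π i)) π *
          MvPolynomial.X 1 ^ desBZ (fun i => ε' (π i)) π *
          MvPolynomial.X 2 ^ colwt ε' :=
  rearrangement_same_generating_polynomial_general n ε ε' τ hτ
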